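/- arXiv:2103.02492 — 5 statements merged into one kernel-verified Lean document; each statement's English description precedes it below -/
import Mathlib

section
/- Let $s$ be a nonnegative real number and $\eta \in (0,1)$. Define the rescaled Chebyshev polynomial $T_{\eta,s}(x) = T_{\lceil s\rceil}\big(\frac{2(1-x)}{1-\eta}-1\big) / T_{\lceil s\rceil}\big(\frac{2}{1-\eta}-1\big)$, where $T_j$ is the degree-$j$ Chebyshev polynomial of the first kind. Then $T_{\eta,s}(0) = 1$, and for every $x$ with $\eta \le x \le 1$ we have $|T_{\eta,s}(x)| \le 2 e^{-2 s \sqrt{\eta}}$. -/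
/-!
On `[η, 1]` the argument `2(1 - x)/(1 - η) - 1` stays in `[-1, 1]`, where `|T_n| ≤ 1`. At `x = 0`
it equals `2/(1 - η) - 1 = cosh (2 artanh √η)`, so the denominator is
`T_n (cosh (2 artanh √η)) = cosh (2 n artanh √η) ≥ exp (2 n √η) / 2`, using `artanh t ≥ t`.
-/

/-- The rescaled and shifted Chebyshev polynomial `T_{η,s}`, as a function. -/
noncomputable def chebApprox (η s x : ℝ) : ℝ :=
  (Polynomial.Chebyshev.T ℝ ⌈s⌉₊).eval (2 * (1 - x) / (1 - η) - 1) /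
    (Polynomial.Chebyshev.T ℝ ⌈s⌉₊).eval (2 / (1 - η) - 1)

open Real Set Polynomial.Chebyshev

namespace Real

theorem le_artanh {x : ℝ} (h0 : 0 ≤ x) (h1 : x < 1) : x ≤ artanh x := by
  have hx : |x| < 1 := by rwa [abs_of_nonneg h0]
  have hsum := sum_le_hasSum {0} (fun k _ => by positivity) (hasSum_log_sub_log_of_abs_lt_one hx)
  rw [artanh_eq_half_log ⟨by linarith, h1.le⟩, log_div (by linarith) (by linarith)]
  simp only [Finset.sum_singleton] at hsum
  linarith

theorem cosh_two_mul_artanh {x : ℝ} (hx : x ∈ Ioo (-1) 1) :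
    cosh (2 * artanh x) = 2 / (1 - x ^ 2) - 1 := by
  have h : 0 < 1 - x ^ 2 := by nlinarith [hx.1, hx.2]
  rw [cosh_two_mul, sinh_sq, cosh_artanh hx, div_pow, sq_sqrt h.le]
  ring

end Real

namespace Polynomial.Chebyshev

theorem exp_le_two_mul_eval_T_real_cosh (n : ℤ) (u : ℝ) :
    exp (n * u) ≤ 2 * (T ℝ n).eval (cosh u) := by
  rw [T_real_cosh, cosh_eq]
  linarith [exp_pos (-(n * u))]

theorem exp_two_mul_sqrt_le_two_mul_eval_T_real (n : ℕ) {η : ℝ} (h0 : 0 ≤ η) (h1 : η < 1) :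
    exp (2 * n * √η) ≤ 2 * (T ℝ n).eval (2 / (1 - η) - 1) := by
  have ht : √η ∈ Ioo (-1) 1 :=
    ⟨by linarith [sqrt_nonneg η], (sqrt_lt' one_pos).2 (by simpa using h1)⟩
  have harg : 2 / (1 - η) - 1 = cosh (2 * artanh √η) := by
    rw [cosh_two_mul_artanh ht, sq_sqrt h0]
  have hexponent : 2 * n * √η ≤ ((n : ℤ) : ℝ) * (2 * artanh √η) := by
    push_cast
    nlinarith [le_artanh (sqrt_nonneg η) ht.2, (n.cast_nonneg : (0 : ℝ) ≤ n)]
  calc exp (2 * n * √η) ≤ exp (((n : ℤ) : ℝ) * (2 * artanh √η)) := exp_le_exp.2 hexponent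
    _ ≤ 2 * (T ℝ n).eval (2 / (1 - η) - 1) := by
        rw [harg]
        exact exp_le_two_mul_eval_T_real_cosh n _

end Polynomial.Chebyshev

theorem chebApprox_bound_general (s : ℝ) (η : ℝ) (hη : η ∈ Set.Ioo (0 : ℝ) 1) :
    chebApprox η s 0 = 1 ∧
      ∀ x : ℝ, η ≤ x → x ≤ 1 →
        |chebApprox η s x| ≤ 2 * Real.exp (-2 * s * Real.sqrt η) := by
  obtain ⟨hη0, hη1⟩ := hη
  set D := (T ℝ ⌈s⌉₊).eval (2 / (1 - η) - 1)
  have hD : exp (2 * s * √η) ≤ 2 * D := calc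
    exp (2 * s * √η) ≤ exp (2 * ⌈s⌉₊ * √η) := by gcongr; exact Nat.le_ceil s
    _ ≤ 2 * D := exp_two_mul_sqrt_le_two_mul_eval_T_real _ hη0.le hη1
  have hDpos : 0 < D := by linarith [exp_pos (2 * s * √η)]
  refine ⟨by simpa [chebApprox] using div_self hDpos.ne', fun x hx0 hx1 => ?_⟩
  have hN : |(T ℝ ⌈s⌉₊).eval (2 * (1 - x) / (1 - η) - 1)| ≤ 1 := by
    refine abs_eval_T_real_le_one _ (abs_le.2 ⟨?_, ?_⟩)
    · linarith [div_nonneg (by linarith : 0 ≤ 2 * (1 - x)) (by linarith : 0 ≤ 1 - η)]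
    · rw [sub_le_iff_le_add, div_le_iff₀ (by linarith)]
      linarith
  rw [chebApprox, abs_div, abs_of_pos hDpos, div_le_iff₀ hDpos]
  calc _ ≤ 1 := hN
    _ = exp (-2 * s * √η) * exp (2 * s * √η) := by rw [← exp_add]; simp
    _ ≤ 2 * exp (-2 * s * √η) * D := by nlinarith [exp_pos (-2 * s * √η)]

theorem chebApprox_bound (s : ℝ) (hs : 0 ≤ s) (η : ℝ) (hη : η ∈ Set.Ioo (0 : ℝ) 1) :
    chebApprox η s 0 = 1 ∧
      ∀ x : ℝ, η ≤ x → x ≤ 1 →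
        |chebApprox η s x| ≤ 2 * Real.exp (-2 * s * Real.sqrt η) :=
  chebApprox_bound_general s η hη
end

section
/- Let $m$ be a positive integer, $\epsilon \le 1/10$, and let $O_1, \ldots, O_m$ be Hermitian operators on a finite-dimensional Hilbert space, each with all eigenvalues in $[0,\epsilon] \cup \{1\}$. Define $\mathrm{Rob}(O_1,\ldots,O_m) = C^\dagger C$ where $C = B(O_1) B(O_2) \cdots B(O_m)$ and $B(O_j)$ is the projector onto the eigenvalue-$1$ eigenspace of $O_j$. Define $\widetilde{\mathrm{Rob}}(O_1,\ldots,O_m) = \sum_{(i_1+i_1')+\cdots+(i_m+i_m') \le 3m} B_{i_m'}(O_m)\cdots B_{i_1'}(O_1) B_{i_1}(O_1) \cdots B_{i_m}(O_m)$, where $B_1(x)=x$, $B_i(x)=x^{i-1}(x-1)$ for $i\ge 2$, and the sum is over tuples of positive integers. Then $\|\widetilde{\mathrm{Rob}}(O_1,\ldots,O_m) - \mathrm{Rob}(O_1,\ldots,O_m)\| \le (10\epsilon)^m$. -/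
open Polynomial

/-- `B_1 = X` and `B_i = X^{i-1}(X-1)` for `i ≥ 2`, as complex polynomials. -/
noncomputable def Bpoly (i : ℕ) : Polynomial ℂ := if i = 1 then X else X ^ (i - 1) * (X - 1)

/-- The truncated robust polynomial applied to operators: sum over tuples of positive
integers with total at most `3m` of `B_{i'_m}(O_m)⋯B_{i'_1}(O_1) B_{i_1}(O_1)⋯B_{i_m}(O_m)`. -/
noncomputable def robTildeOp (m d : ℕ)
    (O : Fin m → (EuclideanSpace ℂ (Fin d) →L[ℂ] EuclideanSpace ℂ (Fin d))) :
    EuclideanSpace ℂ (Fin d) →L[ℂ] EuclideanSpace ℂ (Fin d) :=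
  ∑ p ∈ (((Fintype.piFinset fun _ : Fin m => Finset.Icc 1 (3 * m)) ×ˢ
      (Fintype.piFinset fun _ : Fin m => Finset.Icc 1 (3 * m))).filter
      fun p => (∑ k, p.1 k) + (∑ k, p.2 k) ≤ 3 * m),
    ((List.ofFn fun k => Polynomial.aeval (O k) (Bpoly (p.2 k))).reverse.prod) *
      ((List.ofFn fun k => Polynomial.aeval (O k) (Bpoly (p.1 k))).prod)

/-!
Since `∑_{n=1}^{N} B_n(x) = x^N`, the sum of the terms of `robTildeOp` over the whole box
`[1, 3m]^{2m}` factorises as `O_m^{3m} ⋯ O_1^{3m} O_1^{3m} ⋯ O_m^{3m}`. In an eigenbasis of `O_k`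
the projector `B(O_k)` is the indicator of the eigenvalue `1`, and on the spectrum `[0, ε] ∪ {1}`
the function `x^{3m}` is within `ε^{3m}` of that indicator; so the full-box sum is within
`2m ε^{3m}` of `C^† C`. The same diagonalisation gives `‖B_n(O_k)‖ ≤ ε^{n-1}`, so a term left out
by the truncation, whose indices sum to more than `3m`, has norm at most `ε^e` with `e ≥ m + 1`;
writing `ε^e = (2ε)^e 2^{-e}` and summing the geometric weights `2^{-e}` bounds all of them
together by `(2ε)^{m+1} 4^m`.
-/

open Finset

theorem sum_Bpoly_Icc {M : ℕ} (hM : 1 ≤ M) : ∑ n ∈ Icc 1 M, Bpoly n = X ^ M := by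
  induction M, hM using Nat.le_induction with
  | base => simp [Bpoly]
  | succ M hM ih =>
    rw [sum_Icc_succ_top (by omega), ih, Bpoly, if_neg (by omega), Nat.add_sub_cancel]
    ring

theorem norm_eval_Bpoly_le {ε x : ℝ} (hε0 : 0 ≤ ε) (hε1 : ε ≤ 1) (hx : x ∈ Set.Icc 0 ε ∪ {1})
    {n : ℕ} (hn : 1 ≤ n) : ‖(Bpoly n).eval (x : ℂ)‖ ≤ ε ^ (n - 1) := by
  obtain rfl | hn := hn.eq_or_lt
  · rcases hx with ⟨hx0, hxε⟩ | rfl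
    · simp [Bpoly, abs_of_nonneg hx0, hxε.trans hε1]
    · simp [Bpoly]
  rw [Bpoly, if_neg hn.ne']
  rcases hx with ⟨hx0, hxε⟩ | rfl
  · have hx1 : ‖(x : ℂ) - 1‖ ≤ 1 := by
      rw [← Complex.ofReal_one, ← Complex.ofReal_sub, Complex.norm_real, Real.norm_eq_abs,
        abs_of_nonpos (by linarith)]
      linarith
    rw [eval_mul, eval_pow, eval_sub, eval_X, eval_one, norm_mul, norm_pow, Complex.norm_real,
      Real.norm_of_nonneg hx0]
    simpa using mul_le_mul (pow_le_pow_left₀ hx0 hxε _) hx1 (norm_nonneg _) (by positivity)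
  · simp [pow_nonneg hε0]

namespace List

theorem reverse_ofFn {α : Type*} {n : ℕ} (f : Fin n → α) :
    (ofFn f).reverse = ofFn fun i => f i.rev := by
  refine ext_getElem (by simp) fun i _ _ => ?_
  simp only [getElem_reverse, List.getElem_ofFn, length_ofFn, Fin.rev]
  congr 2
  omega

theorem star_prod {R : Type*} [Monoid R] [StarMul R] (l : List R) :
    star l.prod = (l.map star).reverse.prod := by
  induction l with
  | nil => simp
  | cons a l ih => simp [star_mul, ih]

section Expansion

variable {ι R : Type*} [Semiring R] {n : ℕ}

theorem prod_ofFn_sum (t : Fin n → Finset ι) (f : Fin n → ι → R) :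
    (ofFn fun k => ∑ j ∈ t k, f k j).prod =
      ∑ r ∈ Fintype.piFinset t, (ofFn fun k => f k (r k)).prod := by
  simpa using (MultilinearMap.mkPiAlgebraFin ℕ n R).map_sum_finset f t

theorem prod_reverse_ofFn_sum (t : Fin n → Finset ι) (f : Fin n → ι → R) :
    (ofFn fun k => ∑ j ∈ t k, f k j).reverse.prod =
      ∑ r ∈ Fintype.piFinset t, (ofFn fun k => f k (r k)).reverse.prod := by
  simpa [reverse_ofFn] using
    ((MultilinearMap.mkPiAlgebraFin ℕ n R).domDomCongr Fin.revPerm).map_sum_finset f t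

end Expansion

section Norm

-- Weaker than `NormOneClass A`, which fails for the operators on the zero space.
variable {ι A : Type*} [SeminormedRing A] (h1 : ‖(1 : A)‖ ≤ 1)
include h1

theorem norm_prod_le_of_norm_one_le (l : List A) : ‖l.prod‖ ≤ (l.map norm).prod := by
  cases l with
  | nil => simpa using h1
  | cons a l => exact norm_prod_le' (cons_ne_nil a l)

theorem norm_prod_ofFn_le {n : ℕ} (f : Fin n → A) : ‖(ofFn f).prod‖ ≤ ∏ k, ‖f k‖ := by
  simpa [map_ofFn, prod_ofFn] using norm_prod_le_of_norm_one_le h1 (ofFn f)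

theorem norm_prod_reverse_ofFn_le {n : ℕ} (f : Fin n → A) :
    ‖(ofFn f).reverse.prod‖ ≤ ∏ k, ‖f k‖ := by
  simpa [map_reverse, prod_reverse, map_ofFn, prod_ofFn] using
    norm_prod_le_of_norm_one_le h1 (ofFn f).reverse

theorem norm_prod_map_le_one {f : ι → A} (hf : ∀ i, ‖f i‖ ≤ 1) (l : List ι) :
    ‖(l.map f).prod‖ ≤ 1 := by
  induction l with
  | nil => simpa using h1
  | cons a l ih =>
    rw [map_cons, prod_cons]
    exact (norm_mul_le _ _).trans (mul_le_one₀ (hf a) (norm_nonneg _) ih)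

theorem norm_prod_map_sub_prod_map_le {f g : ι → A} {δ : ℝ} (hf : ∀ i, ‖f i‖ ≤ 1)
    (hg : ∀ i, ‖g i‖ ≤ 1) (hfg : ∀ i, ‖f i - g i‖ ≤ δ) (l : List ι) :
    ‖(l.map f).prod - (l.map g).prod‖ ≤ l.length * δ := by
  induction l with
  | nil => simp
  | cons a l ih =>
    have hδ : 0 ≤ δ := (norm_nonneg _).trans (hfg a)
    have hsplit : f a * (l.map f).prod - g a * (l.map g).prod =
        (f a - g a) * (l.map f).prod + g a * ((l.map f).prod - (l.map g).prod) := by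
      noncomm_ring
    simp only [map_cons, prod_cons, length_cons, hsplit]
    calc _ ≤ ‖f a - g a‖ * ‖(l.map f).prod‖ + ‖g a‖ * ‖(l.map f).prod - (l.map g).prod‖ :=
          (norm_add_le _ _).trans (add_le_add (norm_mul_le _ _) (norm_mul_le _ _))
      _ ≤ δ * 1 + 1 * (l.length * δ) :=
          add_le_add (mul_le_mul (hfg a) (norm_prod_map_le_one h1 hf l) (norm_nonneg _) hδ)
            (mul_le_mul (hg a) ih (norm_nonneg _) zero_le_one)
      _ = (l.length + 1 : ℕ) * δ := by push_cast; ring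

theorem norm_reverse_prod_mul_prod_sub_le {m : ℕ} {f g : Fin m → A} {δ : ℝ}
    (hf : ∀ i, ‖f i‖ ≤ 1) (hg : ∀ i, ‖g i‖ ≤ 1) (hfg : ∀ i, ‖f i - g i‖ ≤ δ) :
    ‖(ofFn f).reverse.prod * (ofFn f).prod - (ofFn g).reverse.prod * (ofFn g).prod‖ ≤
      2 * m * δ := by
  have hlist : ∀ h : Fin m → A,
      (ofFn h).reverse.prod * (ofFn h).prod = (((finRange m).reverse ++ finRange m).map h).prod :=
    fun h => by rw [map_append, prod_append, map_reverse, ← ofFn_eq_map]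
  rw [hlist, hlist]
  calc _ ≤ _ := norm_prod_map_sub_prod_map_le h1 hf hg hfg _
    _ = 2 * m * δ := by
      simp only [length_append, length_reverse, length_finRange]
      push_cast
      ring

end Norm

end List

section Spectral

variable {𝕜 E : Type*} [RCLike 𝕜] [NormedAddCommGroup E] [InnerProductSpace 𝕜 E]

theorem OrthonormalBasis.opNorm_le_of_apply_eq_smul {ι : Type*} [Fintype ι]
    (b : OrthonormalBasis ι 𝕜 E) {A : E →L[𝕜] E} {g : ι → 𝕜} (hA : ∀ i, A (b i) = g i • b i)
    {c : ℝ} (hc : 0 ≤ c) (hg : ∀ i, ‖g i‖ ≤ c) : ‖A‖ ≤ c := by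
  classical
  refine A.opNorm_le_bound hc fun x => ?_
  have hcoord : ∀ i, inner 𝕜 (b i) (A x) = g i * inner 𝕜 (b i) x := by
    intro i
    conv_lhs => rw [← b.sum_repr' x]
    simp only [map_sum, map_smul, hA, inner_sum, inner_smul_right, b.inner_eq_ite]
    simp [mul_comm]
  refine le_of_sq_le_sq ?_ (by positivity)
  rw [mul_pow, ← b.sum_sq_norm_inner_right, ← b.sum_sq_norm_inner_right, mul_sum]
  gcongr with i
  rw [hcoord, norm_mul, mul_pow]
  gcongr
  exact hg i

theorem ContinuousLinearMap.aeval_apply_of_apply_eq_smul {T : E →L[𝕜] E} {μ : 𝕜} {v : E}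
    (hv : T v = μ • v) (p : 𝕜[X]) : aeval T p v = p.eval μ • v := by
  induction p using Polynomial.induction_on with
  | C a => simp [Algebra.algebraMap_eq_smul_one]
  | add p q hp hq => simp [hp, hq, add_smul]
  | monomial n a h =>
    rw [pow_succ, ← mul_assoc, map_mul, aeval_X, mul_apply_eq_comp, hv, map_smul, h, smul_smul]
    congr 1
    simp only [eval_mul, eval_C, eval_pow, eval_X]
    ring

variable [CompleteSpace E] {T : E →L[𝕜] E}

theorem IsStarProjection.apply_eq_ite_of_range_eq_eigenspace {B : E →L[𝕜] E}
    (hB : IsStarProjection B) (hT : IsSelfAdjoint T)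
    (hBT : LinearMap.range (B : E →ₗ[𝕜] E) = Module.End.eigenspace (T : E →ₗ[𝕜] E) 1)
    {μ : ℝ} {v : E} (hv : T v = (μ : 𝕜) • v) : B v = (if μ = 1 then 1 else 0 : 𝕜) • v := by
  obtain ⟨_, hBeq⟩ := isStarProjection_iff_eq_starProjection_range.mp hB
  have hmem : v ∈ Module.End.eigenspace (T : E →ₗ[𝕜] E) (μ : 𝕜) :=
    Module.End.mem_eigenspace_iff.mpr hv
  split_ifs with h
  · subst h
    rw [one_smul, hBeq, Submodule.starProjection_eq_self_iff]
    simpa [hBT] using hmem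
  · rw [zero_smul, hBeq, Submodule.starProjection_apply_eq_zero_iff]
    have hortho := hT.isSymmetric.orthogonalFamily_eigenspaces.isOrtho
      (show (μ : 𝕜) ≠ 1 by exact_mod_cast h)
    rw [Submodule.isOrtho_iff_le] at hortho
    simpa [hBT] using hortho hmem

variable [FiniteDimensional 𝕜 E]

theorem IsSelfAdjoint.opNorm_le_of_apply_eigenvector (hT : IsSelfAdjoint T) {A : E →L[𝕜] E}
    (g : ℝ → 𝕜) {c : ℝ} (hc : 0 ≤ c)
    (hA : ∀ (μ : ℝ) (v : E), T v = (μ : 𝕜) • v → A v = g μ • v)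
    (hg : ∀ μ : ℝ, (μ : 𝕜) ∈ spectrum 𝕜 T → ‖g μ‖ ≤ c) : ‖A‖ ≤ c := by
  have hT' := hT.isSymmetric
  refine (hT'.eigenvectorBasis rfl).opNorm_le_of_apply_eq_smul
    (fun i => hA _ _ (hT'.apply_eigenvectorBasis rfl i)) hc fun i => hg _ ?_
  rw [ContinuousLinearMap.spectrum_eq]
  exact (hT'.hasEigenvalue_eigenvalues rfl i).mem_spectrum

theorem IsSelfAdjoint.norm_aeval_le (hT : IsSelfAdjoint T) (p : 𝕜[X]) {c : ℝ} (hc : 0 ≤ c)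
    (hp : ∀ μ : ℝ, (μ : 𝕜) ∈ spectrum 𝕜 T → ‖p.eval (μ : 𝕜)‖ ≤ c) : ‖aeval T p‖ ≤ c :=
  hT.opNorm_le_of_apply_eigenvector _ hc
    (fun _ _ hv => ContinuousLinearMap.aeval_apply_of_apply_eq_smul hv p) hp

section GappedSpectrum

variable {ε : ℝ} (hT : IsSelfAdjoint T)
  (hspec : ∀ μ : ℝ, (μ : 𝕜) ∈ spectrum 𝕜 T → μ ∈ Set.Icc 0 ε ∪ {1})
include hT hspec

theorem IsSelfAdjoint.norm_pow_le_one (hε1 : ε ≤ 1) (M : ℕ) : ‖T ^ M‖ ≤ 1 := by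
  rw [← aeval_X_pow (R := 𝕜)]
  refine hT.norm_aeval_le _ zero_le_one fun μ hμ => ?_
  rw [eval_pow, eval_X, norm_pow, RCLike.norm_ofReal]
  rcases hspec μ hμ with ⟨hμ0, hμε⟩ | rfl
  · exact pow_le_one₀ (abs_nonneg μ) ((abs_of_nonneg hμ0).trans_le (hμε.trans hε1))
  · simp

theorem IsSelfAdjoint.norm_pow_sub_le {B : E →L[𝕜] E} (hB : IsStarProjection B)
    (hBT : LinearMap.range (B : E →ₗ[𝕜] E) = Module.End.eigenspace (T : E →ₗ[𝕜] E) 1)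
    (hε0 : 0 ≤ ε) (M : ℕ) : ‖T ^ M - B‖ ≤ ε ^ M := by
  refine hT.opNorm_le_of_apply_eigenvector (fun μ => (μ : 𝕜) ^ M - if μ = 1 then 1 else 0)
    (by positivity) (fun μ v hv => ?_) fun μ hμ => ?_
  · have hpow := ContinuousLinearMap.aeval_apply_of_apply_eq_smul hv (X ^ M)
    rw [aeval_X_pow, eval_pow, eval_X] at hpow
    rw [sub_apply, hpow, hB.apply_eq_ite_of_range_eq_eigenspace hT hBT hv, sub_smul]
  · by_cases h1 : μ = 1
    · simp [h1, pow_nonneg hε0]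
    · obtain ⟨hμ0, hμε⟩ : μ ∈ Set.Icc 0 ε := (hspec μ hμ).resolve_right h1
      rw [if_neg h1, sub_zero, norm_pow, RCLike.norm_ofReal, abs_of_nonneg hμ0]
      exact pow_le_pow_left₀ hμ0 hμε M

end GappedSpectrum

end Spectral

theorem IsSelfAdjoint.norm_aeval_Bpoly_le {E : Type*} [NormedAddCommGroup E]
    [InnerProductSpace ℂ E] [CompleteSpace E] [FiniteDimensional ℂ E] {T : E →L[ℂ] E}
    (hT : IsSelfAdjoint T) {ε : ℝ}
    (hspec : ∀ μ : ℝ, (μ : ℂ) ∈ spectrum ℂ T → μ ∈ Set.Icc 0 ε ∪ {1})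
    (hε0 : 0 ≤ ε) (hε1 : ε ≤ 1) {n : ℕ} (hn : 1 ≤ n) : ‖aeval T (Bpoly n)‖ ≤ ε ^ (n - 1) :=
  hT.norm_aeval_le _ (by positivity) fun μ hμ => norm_eval_Bpoly_le hε0 hε1 (hspec μ hμ) hn

section Truncation

variable {A : Type*} {m : ℕ}

def boxTuples (m N : ℕ) : Finset (Fin m → ℕ) := Fintype.piFinset fun _ => Icc 1 N

noncomputable def robTerm [Ring A] [Algebra ℂ A] (O : Fin m → A)
    (p : (Fin m → ℕ) × (Fin m → ℕ)) : A :=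
  (List.ofFn fun k => aeval (O k) (Bpoly (p.2 k))).reverse.prod *
    (List.ofFn fun k => aeval (O k) (Bpoly (p.1 k))).prod

theorem robTildeOp_eq_sum_robTerm (d : ℕ)
    (O : Fin m → (EuclideanSpace ℂ (Fin d) →L[ℂ] EuclideanSpace ℂ (Fin d))) :
    robTildeOp m d O = ∑ p ∈ (boxTuples m (3 * m) ×ˢ boxTuples m (3 * m)).filter
      (fun p => (∑ k, p.1 k) + (∑ k, p.2 k) ≤ 3 * m), robTerm O p :=
  rfl

theorem sum_robTerm_boxTuples [Ring A] [Algebra ℂ A] (O : Fin m → A) {N : ℕ} (hN : 1 ≤ N) :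
    ∑ p ∈ boxTuples m N ×ˢ boxTuples m N, robTerm O p =
      (List.ofFn fun k => O k ^ N).reverse.prod * (List.ofFn fun k => O k ^ N).prod := by
  have hsum : ∀ k, ∑ n ∈ Icc 1 N, aeval (O k) (Bpoly n) = O k ^ N := fun k => by
    rw [← map_sum, sum_Bpoly_Icc hN, aeval_X_pow]
  simp_rw [← hsum, List.prod_reverse_ofFn_sum, List.prod_ofFn_sum, sum_mul_sum, sum_product]
  rw [sum_comm]
  rfl

noncomputable def geomWeight (q : Fin m → ℕ) : ℝ := ∏ k, (1 / 2 : ℝ) ^ (q k - 1)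

theorem sum_geomWeight_boxTuples_le (m N : ℕ) :
    ∑ q ∈ boxTuples m N, geomWeight q ≤ 2 ^ m := by
  simp only [boxTuples, geomWeight]
  rw [← prod_univ_sum (fun _ => Icc 1 N) fun _ n => (1 / 2 : ℝ) ^ (n - 1), prod_const, card_univ,
    Fintype.card_fin]
  gcongr
  rw [← Ico_add_one_right_eq_Icc, sum_Ico_eq_sum_range, Nat.add_sub_cancel]
  simpa using sum_geometric_two_le N

variable [NormedRing A] [NormedAlgebra ℂ A] (h1 : ‖(1 : A)‖ ≤ 1) {O : Fin m → A} {ε : ℝ}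
  (hε0 : 0 ≤ ε) (hε : ε ≤ 1 / 2) (hO : ∀ k n, 1 ≤ n → ‖aeval (O k) (Bpoly n)‖ ≤ ε ^ (n - 1))
include h1 hε0 hε hO

theorem norm_robTerm_le_of_not_le {N K : ℕ} {p : (Fin m → ℕ) × (Fin m → ℕ)}
    (hp : p ∈ boxTuples m N ×ˢ boxTuples m N) (hK : ¬(∑ k, p.1 k) + (∑ k, p.2 k) ≤ K) :
    ‖robTerm O p‖ ≤ (2 * ε) ^ (K + 1 - 2 * m) * (geomWeight p.2 * geomWeight p.1) := by
  simp only [mem_product, boxTuples, Fintype.mem_piFinset, mem_Icc] at hp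
  obtain ⟨hp1, hp2⟩ := hp
  have hexp : K + 1 - 2 * m ≤ ∑ k, (p.2 k - 1) + ∑ k, (p.1 k - 1) := by
    rw [sum_tsub_distrib _ fun k _ => (hp2 k).1, sum_tsub_distrib _ fun k _ => (hp1 k).1]
    simp only [sum_const, card_univ, Fintype.card_fin, smul_eq_mul, mul_one]
    omega
  calc ‖robTerm O p‖
      ≤ (∏ k, ‖aeval (O k) (Bpoly (p.2 k))‖) * ∏ k, ‖aeval (O k) (Bpoly (p.1 k))‖ :=
        (norm_mul_le _ _).trans (mul_le_mul (List.norm_prod_reverse_ofFn_le h1 _)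
          (List.norm_prod_ofFn_le h1 _) (norm_nonneg _) (by positivity))
    _ ≤ (∏ k, ε ^ (p.2 k - 1)) * ∏ k, ε ^ (p.1 k - 1) := by
        gcongr with k _ k _
        exacts [hO _ _ (hp2 k).1, hO _ _ (hp1 k).1]
    _ = (2 * ε) ^ (∑ k, (p.2 k - 1) + ∑ k, (p.1 k - 1)) * (geomWeight p.2 * geomWeight p.1) := by
        simp only [geomWeight, prod_pow_eq_pow_sum]
        rw [pow_add, mul_mul_mul_comm, ← mul_pow, ← mul_pow, show 2 * ε * (1 / 2) = ε by ring]
    _ ≤ (2 * ε) ^ (K + 1 - 2 * m) * (geomWeight p.2 * geomWeight p.1) :=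
        mul_le_mul_of_nonneg_right (pow_le_pow_of_le_one (by positivity) (by linarith) hexp)
          (by unfold geomWeight; positivity)

theorem norm_sum_robTerm_filter_not_le (N K : ℕ) :
    ‖∑ p ∈ (boxTuples m N ×ˢ boxTuples m N).filter
        (fun p => ¬(∑ k, p.1 k) + (∑ k, p.2 k) ≤ K), robTerm O p‖ ≤
      (2 * ε) ^ (K + 1 - 2 * m) * 4 ^ m := by
  have hw : ∀ q : Fin m → ℕ, 0 ≤ geomWeight q := fun q => by unfold geomWeight; positivity
  calc _ ≤ ∑ p ∈ (boxTuples m N ×ˢ boxTuples m N).filter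
        (fun p => ¬(∑ k, p.1 k) + (∑ k, p.2 k) ≤ K), ‖robTerm O p‖ := norm_sum_le _ _
    _ ≤ ∑ p ∈ boxTuples m N ×ˢ boxTuples m N,
          (2 * ε) ^ (K + 1 - 2 * m) * (geomWeight p.2 * geomWeight p.1) := by
        refine (sum_le_sum fun p hp => ?_).trans (sum_le_sum_of_subset_of_nonneg
          (filter_subset _ _) fun p _ _ => by have := hw p.1; have := hw p.2; positivity)
        rw [mem_filter] at hp
        exact norm_robTerm_le_of_not_le h1 hε0 hε hO hp.1 hp.2
    _ = (2 * ε) ^ (K + 1 - 2 * m) *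
          ((∑ q ∈ boxTuples m N, geomWeight q) * ∑ q ∈ boxTuples m N, geomWeight q) := by
        rw [← mul_sum, sum_product, sum_mul_sum, sum_comm]
    _ ≤ (2 * ε) ^ (K + 1 - 2 * m) * (2 ^ m * 2 ^ m) := by
        have hsum := sum_geomWeight_boxTuples_le m N
        gcongr
        exact sum_nonneg fun q _ => hw q
    _ = (2 * ε) ^ (K + 1 - 2 * m) * 4 ^ m := by rw [← mul_pow]; norm_num

end Truncation

theorem two_mul_pow_add_two_mul_pow_le {m : ℕ} {ε : ℝ} (hε0 : 0 ≤ ε) (hε : ε ≤ 1 / 10) :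
    2 * m * ε ^ (3 * m) + (2 * ε) ^ (m + 1) * 4 ^ m ≤ (10 * ε) ^ m := by
  have htail : (2 * ε) ^ (m + 1) * 4 ^ m ≤ 1 / 5 * (10 * ε) ^ m :=
    calc (2 * ε) ^ (m + 1) * 4 ^ m = 2 * ε * (2 * ε * 4) ^ m := by
          rw [pow_succ, mul_pow (2 * ε) 4]; ring
      _ ≤ 1 / 5 * (10 * ε) ^ m :=
          mul_le_mul (by linarith) (pow_le_pow_left₀ (by positivity) (by linarith) m)
            (by positivity) (by norm_num)
  have hhead : 2 * m * ε ^ (3 * m) ≤ 4 / 5 * (10 * ε) ^ m := by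
    have hm : 1 + m * 9 ≤ (10 : ℝ) ^ m := by
      simpa [show (1 : ℝ) + 9 = 10 by norm_num] using
        one_add_mul_le_pow (a := (9 : ℝ)) (by norm_num) m
    calc 2 * m * ε ^ (3 * m) = 2 * m * ε ^ (2 * m) * ε ^ m := by ring
      _ ≤ 2 * m * 1 * ε ^ m := by gcongr; exact pow_le_one₀ hε0 (by linarith)
      _ ≤ 4 / 5 * (10 * ε) ^ m := by
          rw [mul_pow]; nlinarith [pow_nonneg hε0 m]
  linarith

theorem robTildeOp_close (m d : ℕ) (hm : 0 < m) (ε : ℝ) (hε0 : 0 ≤ ε) (hε : ε ≤ 1 / 10)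
    (O : Fin m → (EuclideanSpace ℂ (Fin d) →L[ℂ] EuclideanSpace ℂ (Fin d)))
    (hO : ∀ k, IsSelfAdjoint (O k))
    (hspec : ∀ k, ∀ μ : ℝ, (μ : ℂ) ∈ spectrum ℂ (O k) → μ ∈ Set.Icc 0 ε ∪ {1})
    (B : Fin m → (EuclideanSpace ℂ (Fin d) →L[ℂ] EuclideanSpace ℂ (Fin d)))
    (hB1 : ∀ k, IsIdempotentElem (B k)) (hB2 : ∀ k, IsSelfAdjoint (B k))
    (hB3 : ∀ k, LinearMap.range
        ((B k : EuclideanSpace ℂ (Fin d) →ₗ[ℂ] EuclideanSpace ℂ (Fin d))) =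
      Module.End.eigenspace
        ((O k : EuclideanSpace ℂ (Fin d) →ₗ[ℂ] EuclideanSpace ℂ (Fin d))) 1) :
    ‖robTildeOp m d O -
        ContinuousLinearMap.adjoint ((List.ofFn fun k => B k).prod) *
          (List.ofFn fun k => B k).prod‖ ≤ (10 * ε) ^ m := by
  have h1 : ‖(1 : EuclideanSpace ℂ (Fin d) →L[ℂ] EuclideanSpace ℂ (Fin d))‖ ≤ 1 :=
    ContinuousLinearMap.norm_id_le
  have hproj : ∀ k, IsStarProjection (B k) := fun k => ⟨hB1 k, hB2 k⟩
  have hC : ContinuousLinearMap.adjoint (List.ofFn fun k => B k).prod =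
      (List.ofFn fun k => B k).reverse.prod := by
    rw [← ContinuousLinearMap.star_eq_adjoint, List.star_prod, List.map_ofFn]
    congr 2
    exact List.ofFn_inj.mpr (funext fun k => (hB2 k).star_eq)
  have hhead := List.norm_reverse_prod_mul_prod_sub_le h1
    (fun k => (hO k).norm_pow_le_one (hspec k) (by linarith) (3 * m))
    (fun k => (hproj k).norm_le) fun k => (hO k).norm_pow_sub_le (hspec k) (hproj k) (hB3 k) hε0 _
  rw [← sum_robTerm_boxTuples O (show 1 ≤ 3 * m by omega),
    ← sum_filter_add_sum_filter_not (boxTuples m (3 * m) ×ˢ boxTuples m (3 * m))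
      (fun p => (∑ k, p.1 k) + (∑ k, p.2 k) ≤ 3 * m)] at hhead
  have htail := norm_sum_robTerm_filter_not_le h1 hε0 (by linarith)
    (fun k n hn => (hO k).norm_aeval_Bpoly_le (hspec k) hε0 (by linarith) hn) (3 * m) (3 * m)
  rw [show 3 * m + 1 - 2 * m = m + 1 by omega] at htail
  have hsum := norm_sub_le_of_le hhead htail
  rw [add_sub_right_comm, add_sub_cancel_right] at hsum
  rw [robTildeOp_eq_sum_robTerm, hC]
  exact hsum.trans (two_mul_pow_add_two_mul_pow_le hε0 hε)
end

section
/- Let $O_1, \ldots, O_m$ be Hermitian operators with eigenvalues in $[0,1]$, and suppose there exists an orthogonal projector $\Pi$ with $O_j \Pi = \Pi$ for every $j \in [m]$. Then $\widetilde{\mathrm{Rob}}(O_1,\ldots,O_m)\,\Pi = \Pi$, where $\widetilde{\mathrm{Rob}}$ is the degree-$3m$ truncated robust polynomial $\widetilde{\mathrm{Rob}}(O_1,\ldots,O_m) = \sum_{(i_1+i_1')+\cdots+(i_m+i_m') \le 3m} B_{i_m'}(O_m)\cdots B_{i_1'}(O_1) B_{i_1}(O_1)\cdots B_{i_m}(O_m)$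 with $B_1(x)=x$ and $B_i(x)=x^{i-1}(x-1)$ for $i \ge 2$. -/
/-!
If `O k * Pr = Pr`, then `B_1(O k) = O k` fixes `Pr` from the left, while `B_i(O k)` with `i ≥ 2`
ends in the factor `O k - 1` and so kills it. A product of factors that each fix or kill `Pr`
kills it as soon as one factor does; hence every monomial of `robTildeOp` except
`O_m ⋯ O_1 O_1 ⋯ O_m` (degree `2m ≤ 3m`) kills `Pr`, and that one fixes it.
-/

open Polynomial

section FixOrKill

variable {M : Type*} {p : M}

theorem List.prod_mul_eq_self [Monoid M] {l : List M} (h : ∀ x ∈ l, x * p = p) :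
    l.prod * p = p :=
  MulAction.mem_stabilizerSubmonoid_iff.mp <| Submonoid.list_prod_mem _ fun x hx =>
    MulAction.mem_stabilizerSubmonoid_iff.mpr (h x hx)

theorem List.prod_mul_eq_zero [MonoidWithZero M] {l : List M}
    (hl : ∀ x ∈ l, x * p = p ∨ x * p = 0) (hkill : ∃ x ∈ l, x * p = 0) : l.prod * p = 0 := by
  induction l with
  | nil => simp at hkill
  | cons x l ih =>
    have hl' : ∀ y ∈ l, y * p = p ∨ y * p = 0 := fun y hy => hl y (List.mem_cons_of_mem x hy)
    rw [List.prod_cons, mul_assoc]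
    by_cases hkill' : ∃ y ∈ l, y * p = 0
    · rw [ih hl' hkill', mul_zero]
    · push Not at hkill'
      have hx : x * p = 0 := by
        obtain ⟨y, hy, hyp⟩ := hkill
        rcases List.mem_cons.mp hy with rfl | hy
        · exact hyp
        · exact absurd hyp (hkill' y hy)
      rw [List.prod_mul_eq_self fun y hy => (hl' y hy).resolve_right (hkill' y hy), hx]

end FixOrKill

section Bpoly

variable {A : Type*} [Ring A] [Algebra ℂ A] {a p : A}

theorem aeval_Bpoly_one (a : A) : aeval a (Bpoly 1) = a := by
  simp [Bpoly]

theorem aeval_Bpoly_mul_eq_zero (ha : a * p = p) {i : ℕ} (hi : i ≠ 1) :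
    aeval a (Bpoly i) * p = 0 := by
  simp only [Bpoly, hi, if_false, map_mul, map_pow, aeval_X, map_sub, map_one]
  rw [mul_assoc, sub_mul, one_mul, ha, sub_self, mul_zero]

theorem aeval_Bpoly_mul_eq_self_or_zero (ha : a * p = p) (i : ℕ) :
    aeval a (Bpoly i) * p = p ∨ aeval a (Bpoly i) * p = 0 := by
  rcases eq_or_ne i 1 with rfl | hi
  · exact Or.inl (by rw [aeval_Bpoly_one, ha])
  · exact Or.inr (aeval_Bpoly_mul_eq_zero ha hi)

/-- The factors of `B_{i'_n}(O_n) ⋯ B_{i'_1}(O_1) B_{i_1}(O_1) ⋯ B_{i_n}(O_n)` for `q = (i, i')`. -/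
noncomputable def robWord {n : ℕ} (O : Fin n → A) (q : (Fin n → ℕ) × (Fin n → ℕ)) : List A :=
  (List.ofFn fun k => aeval (O k) (Bpoly (q.2 k))).reverse ++
    List.ofFn fun k => aeval (O k) (Bpoly (q.1 k))

variable {n : ℕ} {O : Fin n → A} {q : (Fin n → ℕ) × (Fin n → ℕ)} {x : A}

theorem mem_robWord :
    x ∈ robWord O q ↔ ∃ k, aeval (O k) (Bpoly (q.1 k)) = x ∨ aeval (O k) (Bpoly (q.2 k)) = x := by
  simp only [robWord, List.mem_append, List.mem_reverse, List.mem_ofFn, exists_or, or_comm]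

theorem mul_eq_self_or_zero_of_mem_robWord (hO : ∀ k, O k * p = p) (hx : x ∈ robWord O q) :
    x * p = p ∨ x * p = 0 := by
  obtain ⟨k, rfl | rfl⟩ := mem_robWord.mp hx <;> exact aeval_Bpoly_mul_eq_self_or_zero (hO k) _

theorem mul_eq_self_of_mem_robWord_one (hO : ∀ k, O k * p = p) (hx : x ∈ robWord O 1) :
    x * p = p := by
  obtain ⟨k, rfl | rfl⟩ := mem_robWord.mp hx <;> simpa [aeval_Bpoly_one] using hO k

theorem exists_mem_robWord_mul_eq_zero (hO : ∀ k, O k * p = p) (hq : q ≠ 1) :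
    ∃ x ∈ robWord O q, x * p = 0 := by
  have : ∃ k, q.1 k ≠ 1 ∨ q.2 k ≠ 1 := by
    by_contra! h
    exact hq (Prod.ext (funext fun k => (h k).1) (funext fun k => (h k).2))
  obtain ⟨k, hk | hk⟩ := this
  · exact ⟨_, mem_robWord.mpr ⟨k, Or.inl rfl⟩, aeval_Bpoly_mul_eq_zero (hO k) hk⟩
  · exact ⟨_, mem_robWord.mpr ⟨k, Or.inr rfl⟩, aeval_Bpoly_mul_eq_zero (hO k) hk⟩

end Bpoly

def robIndex (m : ℕ) : Finset ((Fin m → ℕ) × (Fin m → ℕ)) :=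
  ((Fintype.piFinset fun _ : Fin m => Finset.Icc 1 (3 * m)) ×ˢ
      (Fintype.piFinset fun _ : Fin m => Finset.Icc 1 (3 * m))).filter
    fun q => (∑ k, q.1 k) + (∑ k, q.2 k) ≤ 3 * m

theorem one_mem_robIndex (m : ℕ) : 1 ∈ robIndex m := by
  have hone : (1 : Fin m → ℕ) ∈ Fintype.piFinset fun _ => Finset.Icc 1 (3 * m) :=
    Fintype.mem_piFinset.mpr fun k =>
      Finset.mem_Icc.mpr ⟨le_rfl, by rw [Pi.one_apply]; have := k.pos; omega⟩
  refine Finset.mem_filter.mpr ⟨Finset.mem_product.mpr ⟨hone, hone⟩, ?_⟩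
  simp only [Prod.fst_one, Prod.snd_one, Pi.one_apply, Finset.sum_const, Finset.card_univ,
    Fintype.card_fin, smul_eq_mul, mul_one]
  omega

theorem robTildeOp_eq_sum_robWord (m d : ℕ)
    (O : Fin m → (EuclideanSpace ℂ (Fin d) →L[ℂ] EuclideanSpace ℂ (Fin d))) :
    robTildeOp m d O = ∑ q ∈ robIndex m, (robWord O q).prod := by
  simp only [robWord, List.prod_append]
  rfl

theorem robTildeOp_fixes_ground_general (m d : ℕ)
    (O : Fin m → (EuclideanSpace ℂ (Fin d) →L[ℂ] EuclideanSpace ℂ (Fin d)))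
    (Pr : EuclideanSpace ℂ (Fin d) →L[ℂ] EuclideanSpace ℂ (Fin d))
    (hfix : ∀ k, O k * Pr = Pr) :
    robTildeOp m d O * Pr = Pr := by
  rw [robTildeOp_eq_sum_robWord, Finset.sum_mul,
    Finset.sum_eq_single_of_mem 1 (one_mem_robIndex m)]
  · exact List.prod_mul_eq_self fun x hx => mul_eq_self_of_mem_robWord_one hfix hx
  · intro q _ hq
    exact List.prod_mul_eq_zero (fun x hx => mul_eq_self_or_zero_of_mem_robWord hfix hx)
      (exists_mem_robWord_mul_eq_zero hfix hq)

theorem robTildeOp_fixes_ground (m d : ℕ)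
    (O : Fin m → (EuclideanSpace ℂ (Fin d) →L[ℂ] EuclideanSpace ℂ (Fin d)))
    (hO : ∀ k, IsSelfAdjoint (O k))
    (hspec : ∀ k, ∀ μ : ℝ, (μ : ℂ) ∈ spectrum ℂ (O k) → μ ∈ Set.Icc (0 : ℝ) 1)
    (Pr : EuclideanSpace ℂ (Fin d) →L[ℂ] EuclideanSpace ℂ (Fin d))
    (hPr1 : IsIdempotentElem Pr) (hPr2 : IsSelfAdjoint Pr)
    (hfix : ∀ k, O k * Pr = Pr) :
    robTildeOp m d O * Pr = Pr :=
  robTildeOp_fixes_ground_general m d O Pr hfix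
end

section
/- Let $n$ be a positive integer and let $s$ be a real number with $\sqrt{n} \le s \le n$. Then there exists a multilinear polynomial $P$ in $n$ variables of degree $O(s)$ such that for every $x \in \{0,1\}^n$, $|P(x) - \mathrm{AND}(x)| \le 2^{-s^2/n}$, where $\mathrm{AND}(x) = 1$ if $x_1 = \cdots = x_n = 1$ and $0$ otherwise. -/
/-!
By symmetrization it suffices to find a univariate `R` with `R 0 = 1` and `|R m| ≤ 2^(-a)` for
`1 ≤ m ≤ n`, where `a = ⌈s²/n⌉`: the function `x ↦ R (n - |x|)` on the cube is represented by a
multilinear polynomial of the same degree, via Newton's forward-difference expansion of `R` in the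
binomial basis and `esymm k (x) = choose |x| k`.

Take `R = P · ∏_{i ≤ log₁₆ (n/a)} F_i`. Here `P = ∏_{j ≤ a} (1 - X/j)` kills `1, …, a` and is at
most `m^a/a!` beyond, and `F_i` is a Chebyshev polynomial rescaled to be `1` at `0`, at most `1`
on `[0, n]` and at most `2 (1 + √(a 16^i/n))^(-d_i)` on `[a 16^i, n]`. On `[a 16^i, a 16^(i+1)]`
the factor `F_i` beats the growth of `P`, and the degrees `d_i = O(√(an) (i+2)/4^i)` sum to
`O(√(an)) = O(s)`.
-/

open Finset Polynomial Real
open scoped Nat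

theorem Polynomial.eval_natCast_eq_sum_fwdDiff {R : Type*} [CommRing R] (Q : R[X]) (m : ℕ) :
    Q.eval (m : R) =
      ∑ k ∈ range (Q.natDegree + 1), (m.choose k : R) * (fwdDiff 1)^[k] Q.eval 0 := by
  have hnewton := shift_eq_sum_fwdDiff_iter (1 : R) Q.eval m 0
  rw [zero_add, nsmul_one] at hnewton
  simp only [hnewton, nsmul_eq_mul]
  have hsub₁ : range (m + 1) ⊆ range (m + Q.natDegree + 1) := range_subset_range.mpr (by omega)
  have hsub₂ : range (Q.natDegree + 1) ⊆ range (m + Q.natDegree + 1) :=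
    range_subset_range.mpr (by omega)
  rw [sum_subset hsub₁ fun k _ hk => ?_, ← sum_subset hsub₂ fun k _ hk => ?_]
  · rw [fwdDiff_iter_eq_zero_of_degree_lt (by simpa using hk)]
    simp
  · rw [Nat.choose_eq_zero_of_lt (by simpa using hk)]
    simp

namespace MvPolynomial

variable {σ R : Type*} [Fintype σ] [CommRing R]

theorem totalDegree_esymm_le (k : ℕ) : (esymm σ R k).totalDegree ≤ k := by
  classical
  rw [← mem_restrictTotalDegree, esymm_eq_sum_monomial]
  refine Submodule.sum_mem _ fun t ht => ?_
  simp [restrictTotalDegree, ← Finsupp.sum_finsetSum_index, (mem_powersetCard.mp ht).2]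

theorem esymm_mem_restrictDegree_one (k : ℕ) : esymm σ R k ∈ restrictDegree σ R 1 := by
  classical
  rw [esymm_eq_sum_monomial]
  refine Submodule.sum_mem _ fun t _ => ?_
  simp only [restrictDegree, monomial_mem_restrictSupport]
  exact Or.inl fun i => by simp [Finsupp.single_apply, Finset.sum_apply']; split_ifs <;> simp

theorem eval_esymm_of_boolean [DecidableEq R] (k : ℕ) {x : σ → R}
    (hx : ∀ i, x i = 0 ∨ x i = 1) : eval x (esymm σ R k) = ((#{i | x i = 1}).choose k : R) := by
  classical
  set T : Finset σ := {i | x i = 1}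
  have hprod (t : Finset σ) : ∏ i ∈ t, x i = if t ⊆ T then 1 else 0 := by
    calc ∏ i ∈ t, x i = ∏ i ∈ t, if i ∈ T then 1 else 0 :=
          prod_congr rfl fun i _ => by rcases hx i with h | h <;> simp [T, h]
      _ = _ := by rw [prod_boole]; congr 1
  have hsubsets : {t ∈ powersetCard k (univ : Finset σ) | t ⊆ T} = powersetCard k T := by
    ext t
    simp only [mem_filter, mem_powersetCard, subset_univ, true_and]
    tauto
  simp_rw [esymm, map_sum, map_prod, eval_X, hprod, sum_boole, hsubsets, card_powersetCard]

theorem exists_multilinear_eval_eq_eval_card [DecidableEq R] (Q : R[X]) :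
    ∃ P : MvPolynomial σ R, P.totalDegree ≤ Q.natDegree ∧ (∀ i, P.degreeOf i ≤ 1) ∧
      ∀ x : σ → R, (∀ i, x i = 0 ∨ x i = 1) → eval x P = Q.eval (#{i | x i = 1} : R) := by
  set P : MvPolynomial σ R :=
    ∑ k ∈ range (Q.natDegree + 1), (fwdDiff 1)^[k] Q.eval 0 • esymm σ R k
  have hP : P ∈ restrictTotalDegree σ R Q.natDegree ⊓ restrictDegree σ R 1 :=
    Submodule.sum_mem _ fun k hk => Submodule.smul_mem _ _
      ⟨(mem_restrictTotalDegree _ _ _).mpr ((totalDegree_esymm_le k).trans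
        (Nat.lt_succ_iff.mp (mem_range.mp hk))), esymm_mem_restrictDegree_one k⟩
  refine ⟨P, (mem_restrictTotalDegree _ _ _).mp hP.1, fun i => degreeOf_le_iff.mpr fun s hs =>
    (mem_restrictDegree _ _ _).mp hP.2 s hs i, fun x hx => ?_⟩
  simp only [P, map_sum, smul_eval, eval_esymm_of_boolean _ hx, eval_natCast_eq_sum_fwdDiff,
    mul_comm]

end MvPolynomial

namespace Polynomial.Chebyshev

theorem abs_eval_T_real_le_eval_T_real (n : ℤ) {v x : ℝ} (hv : -1 ≤ v) (hvx : v ≤ x)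
    (hx : 1 ≤ x) : |(T ℝ n).eval v| ≤ (T ℝ n).eval x := by
  rcases le_total v 1 with hv1 | hv1
  · exact (abs_eval_T_real_le_one n (abs_le.mpr ⟨hv, hv1⟩)).trans (one_le_eval_T_real n hx)
  rw [abs_of_nonneg (zero_le_one.trans (one_le_eval_T_real n hv1)), ← cosh_arcosh hv1,
    ← cosh_arcosh hx, T_real_cosh, T_real_cosh, cosh_le_cosh, abs_mul, abs_mul,
    abs_of_nonneg (arcosh_nonneg hv1), abs_of_nonneg (arcosh_nonneg hx)]
  gcongr
  exact (arcosh_le_arcosh (by linarith) (by linarith)).mpr hvx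

theorem add_sqrt_sq_sub_one_pow_le_two_mul_eval_T_real (n : ℕ) {x : ℝ} (hx : 1 ≤ x) :
    (x + √(x ^ 2 - 1)) ^ n ≤ 2 * (T ℝ n).eval x := by
  conv_rhs => rw [← cosh_arcosh hx]
  rw [← exp_arcosh hx, ← exp_nat_mul, T_real_cosh, cosh_eq, Int.cast_natCast]
  linarith [exp_pos (-(n * arcosh x))]

end Polynomial.Chebyshev

open Polynomial.Chebyshev in
/-- The rescaled Chebyshev polynomial `T_d(L u) / T_d(L 0)`, where the affine map
`L u = 1 + 2 (K - u) / N` sends `[K, N]` into `[-1, 1]` and `0` to a point `> 1`. -/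
theorem exists_poly_eval_zero_eq_one_small_on_Icc {K N : ℝ} (hK : 0 ≤ K) (hN : 0 < N) (d : ℕ) :
    ∃ F : ℝ[X], F.natDegree ≤ d ∧ F.eval 0 = 1 ∧ (∀ u ∈ Set.Icc 0 N, |F.eval u| ≤ 1) ∧
      ∀ u ∈ Set.Icc K N, |F.eval u| * (1 + √(K / N)) ^ d ≤ 2 := by
  have hKN : 0 ≤ K / N := div_nonneg hK hN.le
  set x₀ := 1 + 2 * (K / N)
  have hx₀ : 1 ≤ x₀ := by linarith
  set L : ℝ[X] := C x₀ - C (2 / N) * X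
  have hL (u : ℝ) : L.eval u = x₀ - 2 * u / N := by simp [L]; ring
  have hL_ge (u : ℝ) (hu : u ≤ N) : -1 ≤ L.eval u := by
    have : 2 * u / N ≤ 2 := by rw [div_le_iff₀ hN]; linarith
    linarith [hL u]
  have hT₀ : 0 < (T ℝ d).eval x₀ := zero_lt_one.trans_le (one_le_eval_T_real _ hx₀)
  have hF (u : ℝ) : |(C ((T ℝ d).eval x₀)⁻¹ * (T ℝ d).comp L).eval u| =
      |(T ℝ d).eval (L.eval u)| / (T ℝ d).eval x₀ := by
    rw [eval_mul, eval_C, eval_comp, abs_mul, abs_inv, abs_of_pos hT₀, inv_mul_eq_div]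
  refine ⟨C ((T ℝ d).eval x₀)⁻¹ * (T ℝ d).comp L, ?_, ?_, fun u hu => ?_, fun u hu => ?_⟩
  · refine natDegree_C_mul_le _ _ |>.trans <| natDegree_comp_le.trans ?_
    have : L.natDegree ≤ 1 := (natDegree_sub_le _ _).trans (max_le (by simp)
      (natDegree_C_mul_le _ _ |>.trans natDegree_X_le))
    simpa [natDegree_T] using Nat.mul_le_mul_left d this
  · simp [eval_comp, hL, hT₀.ne']
  · rw [hF, div_le_one hT₀]
    refine abs_eval_T_real_le_eval_T_real _ (hL_ge u hu.2) ?_ hx₀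
    have : 0 ≤ 2 * u / N := div_nonneg (by linarith [hu.1]) hN.le
    linarith [hL u]
  · have hL_le : L.eval u ≤ 1 := by
      have : 2 * K / N ≤ 2 * u / N := by gcongr; exact hu.1
      linarith [hL u, mul_div_assoc 2 K N]
    have hsqrt : 1 + √(K / N) ≤ x₀ + √(x₀ ^ 2 - 1) := by
      gcongr
      nlinarith
    calc |(C ((T ℝ d).eval x₀)⁻¹ * (T ℝ d).comp L).eval u| * (1 + √(K / N)) ^ d
        ≤ 1 / (T ℝ d).eval x₀ * (2 * (T ℝ d).eval x₀) := by
          rw [hF]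
          gcongr
          · exact abs_eval_T_real_le_one _ (abs_le.mpr ⟨hL_ge u hu.2, hL_le⟩)
          · exact (pow_le_pow_left₀ (by positivity) hsqrt d).trans
              (add_sqrt_sq_sub_one_pow_le_two_mul_eval_T_real d hx₀)
      _ = 2 := by field_simp

theorem exists_poly_eval_zero_eq_one_vanishing (a : ℕ) :
    ∃ P : ℝ[X], P.natDegree ≤ a ∧ P.eval 0 = 1 ∧ (∀ m : ℕ, 1 ≤ m → m ≤ a → P.eval (m : ℝ) = 0) ∧
      ∀ u : ℝ, a ≤ u → |P.eval u| ≤ u ^ a / a ! := by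
  have heval (u : ℝ) : (∏ j ∈ range a, (1 - C ((j : ℝ) + 1)⁻¹ * X)).eval u =
      ∏ j ∈ range a, (1 - u / (j + 1)) := by
    simp [eval_prod, div_eq_inv_mul]
  refine ⟨∏ j ∈ range a, (1 - C ((j : ℝ) + 1)⁻¹ * X), ?_, by simp [heval], fun m hm hma => ?_,
    fun u hu => ?_⟩
  · refine (natDegree_prod_le _ _).trans <| (sum_le_card_nsmul _ _ 1 fun j _ => ?_).trans (by simp)
    exact (natDegree_sub_le _ _).trans
      (max_le (by simp) (natDegree_C_mul_le _ _ |>.trans natDegree_X_le))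
  · rw [heval]
    refine prod_eq_zero (i := m - 1) (mem_range.mpr (by omega)) ?_
    rw [show ((m - 1 : ℕ) : ℝ) + 1 = m by rw [Nat.cast_sub hm]; simp, div_self (by positivity),
      sub_self]
  · rw [heval, abs_prod]
    calc ∏ j ∈ range a, |1 - u / (j + 1)| ≤ ∏ j ∈ range a, u / (j + 1) :=
          prod_le_prod (fun _ _ => abs_nonneg _) fun j hj => ?_
      _ = u ^ a / a ! := by
          rw [prod_div_distrib, prod_const, card_range, ← prod_range_add_one_eq_factorial]
          push_cast; rfl
    have hj : (j : ℝ) + 1 ≤ u := le_trans (by exact_mod_cast mem_range.mp hj) hu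
    rw [abs_of_nonpos (by rw [sub_nonpos, one_le_div (by positivity)]; exact hj)]
    linarith

theorem Nat.exists_mul_pow_le_lt_mul_pow_succ {a b m n : ℕ} (hb : 1 < b) (ha : 0 < a)
    (ham : a ≤ m) (hmn : m ≤ n) : ∃ i ≤ Nat.log b (n / a), a * b ^ i ≤ m ∧ m < a * b ^ (i + 1) := by
  have hma : m / a ≠ 0 := (Nat.div_pos ham ha).ne'
  refine ⟨Nat.log b (m / a), Nat.log_mono_right (Nat.div_le_div_right hmn), ?_, ?_⟩
  · rw [mul_comm, ← Nat.le_div_iff_mul_le ha]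
    exact Nat.pow_log_le_self b hma
  · rw [mul_comm, ← Nat.div_lt_iff_lt_mul ha]
    exact Nat.lt_pow_succ_log_self hb _

theorem Real.two_rpow_mul_le_one_add_pow {y : ℝ} (hy₀ : 0 ≤ y) (hy₁ : y ≤ 1) (d : ℕ) :
    (2 : ℝ) ^ (d * y) ≤ (1 + y) ^ d := by
  rw [mul_comm, rpow_mul zero_le_two, rpow_natCast]
  gcongr
  simpa [one_add_one_eq_two] using rpow_one_add_le_one_add_mul_self (s := 1) (by norm_num) hy₀ hy₁

theorem pow_div_factorial_le_two_pow {a i : ℕ} {u : ℝ} (hu₀ : 0 ≤ u)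
    (hu : u ≤ a * 16 ^ (i + 1)) : u ^ a / a ! ≤ 2 ^ (a * (4 * i + 6)) := by
  have hexp : exp a ≤ 4 ^ a := by
    rw [← exp_one_pow]
    gcongr
    linarith [exp_one_lt_d9]
  calc u ^ a / a ! ≤ (a * 16 ^ (i + 1)) ^ a / a ! := by gcongr
    _ = (16 ^ (i + 1)) ^ a * (a ^ a / a !) := by ring
    _ ≤ (16 ^ (i + 1)) ^ a * 4 ^ a := by
        gcongr
        exact (pow_div_factorial_le_exp (a : ℝ) a.cast_nonneg a).trans hexp
    _ = 2 ^ (a * (4 * i + 6)) := by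
        rw [← mul_pow, mul_comm a, pow_mul, pow_add 2, pow_mul, pow_succ]
        norm_num [mul_assoc]

/-- Chosen so that `bandDegree a n i * √(a 16^i / n) ≥ 4a(i+2)`: the `i`-th Chebyshev factor
then decays like `2^(-4a(i+2))` on `[a 16^i, n]`, which beats the growth `2^(a(4i+6))` of the
vanishing polynomial on `[a 16^i, a 16^(i+1)]`. -/
noncomputable def bandDegree (a n i : ℕ) : ℕ := ⌈4 * (i + 2) * √(a * n) / 4 ^ i⌉₊

section bandDegree

variable {a n i : ℕ}

theorem four_pow_sq : ((4 : ℝ) ^ i) ^ 2 = 16 ^ i := by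
  rw [← pow_mul, mul_comm, pow_mul]; norm_num

theorem mul_four_pow_le_sqrt_mul (hin : a * 16 ^ i ≤ n) : (a : ℝ) * 4 ^ i ≤ √(a * n) := by
  rw [le_sqrt (by positivity) (by positivity), mul_pow, four_pow_sq, sq, mul_assoc]
  exact_mod_cast Nat.mul_le_mul_left a hin

theorem sqrt_mul_mul_sqrt_div (hn : 0 < n) :
    √(a * n) * √(a * 16 ^ i / n) = a * 4 ^ i := by
  rw [← sqrt_mul (by positivity), ← four_pow_sq,
    show (a : ℝ) * n * (a * (4 ^ i) ^ 2 / n) = (a * 4 ^ i) ^ 2 by field_simp]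
  exact sqrt_sq (by positivity)

theorem bandDegree_le (ha : 1 ≤ a) (hin : a * 16 ^ i ≤ n) :
    (bandDegree a n i : ℝ) ≤ 16 * √(a * n) * (1 / 2) ^ i := by
  have h4 : (4 : ℝ) ^ i = 2 ^ i * 2 ^ i := by rw [← mul_pow]; norm_num
  have hi : (i : ℝ) + 2 ≤ 2 * 2 ^ i := by
    have := Nat.lt_two_pow_self (n := i + 1)
    rw [pow_succ] at this
    exact_mod_cast (by omega : i + 2 ≤ 2 ^ i * 2).trans_eq (mul_comm _ _)
  have hsqrt := mul_four_pow_le_sqrt_mul hin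
  refine (Nat.ceil_le_two_mul ?_).trans ?_
  · rw [le_div_iff₀ (by positivity)]
    have : (1 : ℝ) ≤ a := by exact_mod_cast ha
    have h8 : (2⁻¹ : ℝ) ≤ 4 * (i + 2) * a := by nlinarith [i.cast_nonneg (α := ℝ)]
    calc (2⁻¹ : ℝ) * 4 ^ i ≤ 4 * (i + 2) * a * 4 ^ i := by gcongr
      _ = 4 * (i + 2) * (a * 4 ^ i) := by ring
      _ ≤ 4 * (i + 2) * √(a * n) := by gcongr
  · rw [h4, div_pow, one_pow]
    field_simp
    nlinarith [sqrt_nonneg ((a : ℝ) * n)]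

theorem four_mul_mul_le_bandDegree_mul (hn : 0 < n) :
    4 * a * (i + 2) ≤ bandDegree a n i * √(a * 16 ^ i / n) := by
  calc (4 * a * (i + 2) : ℝ) = 4 * (i + 2) * √(a * n) / 4 ^ i * √(a * 16 ^ i / n) := by
        rw [mul_div_right_comm, mul_assoc (4 * (i + 2) / 4 ^ i : ℝ), sqrt_mul_mul_sqrt_div hn]
        field_simp
    _ ≤ bandDegree a n i * √(a * 16 ^ i / n) := by
        gcongr
        exact Nat.le_ceil _

theorem sum_bandDegree_le (ha : 1 ≤ a) (han : a ≤ n) :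
    ∑ i ∈ range (Nat.log 16 (n / a) + 1), (bandDegree a n i : ℝ) ≤ 32 * √(a * n) := by
  calc ∑ i ∈ range (Nat.log 16 (n / a) + 1), (bandDegree a n i : ℝ)
      ≤ ∑ i ∈ range (Nat.log 16 (n / a) + 1), 16 * √(a * n) * (1 / 2) ^ i := by
        refine sum_le_sum fun i hi => bandDegree_le ha ?_
        rw [mul_comm, ← Nat.le_div_iff_mul_le ha]
        exact Nat.pow_le_of_le_log (Nat.div_pos han ha).ne' (Nat.lt_succ_iff.mp (mem_range.mp hi))
    _ ≤ 16 * √(a * n) * 2 := by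
        rw [← mul_sum]
        gcongr
        exact sum_geometric_two_le _
    _ = 32 * √(a * n) := by ring

end bandDegree

theorem abs_mul_le_inv_two_pow {a i d : ℕ} (ha : 1 ≤ a) {p f y : ℝ}
    (hp : |p| ≤ 2 ^ (a * (4 * i + 6))) (hy₀ : 0 ≤ y) (hy₁ : y ≤ 1)
    (hdy : 4 * a * (i + 2) ≤ d * y) (hf : |f| * (1 + y) ^ d ≤ 2) : |p * f| ≤ (2 ^ a)⁻¹ := by
  have hf' : |f| * 2 ^ (a * (4 * i + 6) + a + a) ≤ 2 := by
    refine le_trans ?_ hf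
    gcongr
    refine le_trans ?_ (two_rpow_mul_le_one_add_pow hy₀ hy₁ d)
    rw [← rpow_natCast]
    gcongr
    · norm_num
    · push_cast; linarith
  rw [pow_add, pow_add] at hf'
  have h2a : (2 : ℝ) ≤ 2 ^ a := by simpa using pow_le_pow_right₀ one_le_two ha
  have h1 : 2 ^ (a * (4 * i + 6)) * |f| * 2 ^ a ≤ 1 := by nlinarith [abs_nonneg f]
  rw [abs_mul, ← one_div, le_div_iff₀ (by positivity)]
  calc |p| * |f| * 2 ^ a ≤ 2 ^ (a * (4 * i + 6)) * |f| * 2 ^ a := by gcongr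
    _ ≤ 1 := h1

theorem exists_poly_eval_zero_eq_one_abs_eval_le {a n : ℕ} (ha : 1 ≤ a) (han : a ≤ n) :
    ∃ R : ℝ[X], (R.natDegree : ℝ) ≤ 33 * √(a * n) ∧ R.eval 0 = 1 ∧
      ∀ m : ℕ, 1 ≤ m → m ≤ n → |R.eval (m : ℝ)| ≤ (2 ^ a)⁻¹ := by
  have hn : 0 < n := by omega
  have hn' : (0 : ℝ) < n := by exact_mod_cast hn
  obtain ⟨P, hPdeg, hP0, hProots, hPbound⟩ := exists_poly_eval_zero_eq_one_vanishing a
  choose F hFdeg hF0 hFle hFsmall using fun i => exists_poly_eval_zero_eq_one_small_on_Icc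
    (K := a * 16 ^ i) (by positivity) hn' (bandDegree a n i)
  set J := Nat.log 16 (n / a)
  refine ⟨P * ∏ i ∈ range (J + 1), F i, ?_, by simp [eval_prod, hP0, hF0], fun m hm hmn => ?_⟩
  · calc ((P * ∏ i ∈ range (J + 1), F i).natDegree : ℝ)
        ≤ a + ∑ i ∈ range (J + 1), (bandDegree a n i : ℝ) := by
          exact_mod_cast natDegree_mul_le.trans <| Nat.add_le_add hPdeg <|
            (natDegree_prod_le _ _).trans (sum_le_sum fun i _ => hFdeg i)
      _ ≤ √(a * n) + 32 * √(a * n) := by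
          gcongr
          · simpa using mul_four_pow_le_sqrt_mul (i := 0) (by simpa using han)
          · exact sum_bandDegree_le ha han
      _ = 33 * √(a * n) := by ring
  rcases le_or_gt m a with hma | hma
  · rw [eval_mul, hProots m hm hma, zero_mul, abs_zero]
    positivity
  obtain ⟨i, hiJ, hKm, hmK⟩ :=
    Nat.exists_mul_pow_le_lt_mul_pow_succ (b := 16) (by norm_num) ha hma.le hmn
  have hKm' : (a : ℝ) * 16 ^ i ≤ m := by exact_mod_cast hKm
  have hmn' : (m : ℝ) ≤ n := by exact_mod_cast hmn
  have hrest : |∏ j ∈ (range (J + 1)).erase i, (F j).eval (m : ℝ)| ≤ 1 := by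
    rw [abs_prod]
    exact prod_le_one (fun _ _ => abs_nonneg _) fun j _ => hFle j m ⟨m.cast_nonneg, hmn'⟩
  rw [eval_mul, eval_prod, ← mul_prod_erase _ _ (mem_range.mpr (Nat.lt_succ_of_le hiJ)),
    ← mul_assoc, abs_mul]
  refine (mul_le_of_le_one_right (abs_nonneg _) hrest).trans <|
    abs_mul_le_inv_two_pow ha ?_ (sqrt_nonneg _) ?_ (four_mul_mul_le_bandDegree_mul hn)
      (hFsmall i m ⟨hKm', hmn'⟩)
  · exact (hPbound m (by exact_mod_cast hma.le)).trans
      (pow_div_factorial_le_two_pow m.cast_nonneg (by exact_mod_cast hmK.le))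
  · rw [sqrt_le_one, div_le_one hn']
    exact_mod_cast hKm.trans hmn

theorem exists_multilinear_abs_sub_and_le {n : ℕ} {R : ℝ[X]} {ε : ℝ} (hε : 0 ≤ ε)
    (hR₀ : R.eval 0 = 1) (hR : ∀ m : ℕ, 1 ≤ m → m ≤ n → |R.eval (m : ℝ)| ≤ ε) :
    ∃ P : MvPolynomial (Fin n) ℝ, P.totalDegree ≤ R.natDegree ∧ (∀ i, P.degreeOf i ≤ 1) ∧
      ∀ x : Fin n → ℝ, (∀ i, x i = 0 ∨ x i = 1) →
        |MvPolynomial.eval x P - (if ∀ i, x i = 1 then (1 : ℝ) else 0)| ≤ ε := by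
  obtain ⟨P, hPdeg, hPdegOf, hPeval⟩ :=
    MvPolynomial.exists_multilinear_eval_eq_eval_card (σ := Fin n) (R.comp (C (n : ℝ) - X))
  refine ⟨P, hPdeg.trans natDegree_comp_le |>.trans_eq ?_, hPdegOf, fun x hx => ?_⟩
  · rw [show C (n : ℝ) - X = -(X - C (n : ℝ)) by ring, natDegree_neg, natDegree_X_sub_C, mul_one]
  rw [hPeval x hx, eval_comp]
  simp only [eval_sub, eval_C, eval_X]
  have hw : #{i | x i = 1} ≤ n := (card_le_univ _).trans_eq (Fintype.card_fin n)
  split_ifs with hall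
  · rw [show #{i | x i = 1} = n by simp [hall], sub_self, hR₀, sub_self, abs_zero]
    exact hε
  have hw' : #{i | x i = 1} < n := hw.lt_of_ne fun h => hall fun i =>
    card_filter_eq_iff.mp (by rw [h, card_univ, Fintype.card_fin]) i (mem_univ i)
  rw [sub_zero, ← Nat.cast_sub hw]
  exact hR _ (by omega) (by omega)

theorem sqrt_ceil_sq_div_mul_le {s N : ℝ} (hN : 0 < N) (hs : 0 ≤ s) (hNs : N ≤ s ^ 2) :
    √(⌈s ^ 2 / N⌉₊ * N) ≤ 2 * s := by
  have hceil := Nat.ceil_le_two_mul (show (2⁻¹ : ℝ) ≤ s ^ 2 / N by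
    rw [le_div_iff₀ hN]; linarith)
  rw [sqrt_le_left (by positivity)]
  calc (⌈s ^ 2 / N⌉₊ : ℝ) * N ≤ 2 * (s ^ 2 / N) * N := by gcongr
    _ ≤ (2 * s) ^ 2 := by field_simp; nlinarith

theorem and_approx :
    ∃ C : ℝ, 0 < C ∧ ∀ n : ℕ, 0 < n → ∀ s : ℝ, Real.sqrt n ≤ s → s ≤ n →
      ∃ P : MvPolynomial (Fin n) ℝ,
        (P.totalDegree : ℝ) ≤ C * s ∧ (∀ i, P.degreeOf i ≤ 1) ∧
        ∀ x : Fin n → ℝ, (∀ i, x i = 0 ∨ x i = 1) →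
          |MvPolynomial.eval x P - (if ∀ i, x i = 1 then (1 : ℝ) else 0)| ≤
            (2 : ℝ) ^ (-(s ^ 2 / n)) := by
  refine ⟨66, by norm_num, fun n hn s hs₁ hs₂ => ?_⟩
  have hn' : (0 : ℝ) < n := by exact_mod_cast hn
  have hs : 0 < s := (sqrt_pos.mpr hn').trans_le hs₁
  have hns : (n : ℝ) ≤ s ^ 2 := by rw [← sq_sqrt hn'.le]; gcongr
  have hk₁ : 1 ≤ s ^ 2 / n := (one_le_div hn').mpr hns
  have hk₂ : s ^ 2 / n ≤ n := by rw [div_le_iff₀ hn']; nlinarith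
  obtain ⟨R, hRdeg, hR₀, hR⟩ := exists_poly_eval_zero_eq_one_abs_eval_le
    (Nat.one_le_ceil_iff.mpr (by linarith)) (Nat.ceil_le.mpr hk₂)
  obtain ⟨P, hPdeg, hPdegOf, hP⟩ :=
    exists_multilinear_abs_sub_and_le (by positivity) hR₀ hR
  refine ⟨P, ?_, hPdegOf, fun x hx => (hP x hx).trans ?_⟩
  · calc (P.totalDegree : ℝ) ≤ R.natDegree := by exact_mod_cast hPdeg
      _ ≤ 33 * (2 * s) := hRdeg.trans (by gcongr; exact sqrt_ceil_sq_div_mul_le hn' hs.le hns)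
      _ = 66 * s := by ring
  · rw [← rpow_natCast, ← rpow_neg zero_le_two]
    exact rpow_le_rpow_of_exponent_le one_le_two (neg_le_neg (Nat.le_ceil _))
end

section
/- Let $t$ be a positive integer and let $p(y) = T_{1/t,\,2\sqrt{t}}(y)$ be the rescaled Chebyshev polynomial of degree $\lceil 2\sqrt{t}\rceil$ defined by $T_{\eta,s}(y) = T_{\lceil s\rceil}\big(\frac{2(1-y)}{1-\eta}-1\big)/T_{\lceil s\rceil}\big(\frac{2}{1-\eta}-1\big)$ with $\eta = 1/t$. Then $p(0) = 1$ and $|p(y)| \le 1/20$ for all $y \in [1/t, 1]$. -/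
open Real Polynomial.Chebyshev

theorem Polynomial.Chebyshev.add_sqrt_sq_sub_one_pow_le_two_mul_eval_T_real_s10 (n : ℕ) {x : ℝ}
    (hx : 1 ≤ x) : (x + √(x ^ 2 - 1)) ^ n ≤ 2 * (T ℝ n).eval x := by
  rw [← exp_arcosh hx, ← exp_nat_mul, ← cosh_arcosh hx, T_real_cosh, cosh_arcosh hx, cosh_eq]
  push_cast
  linarith [exp_pos (-(n * arcosh x))]

theorem Real.exp_two_mul_le_one_add_div_one_sub {r : ℝ} (hr0 : 0 ≤ r) (hr1 : r < 1) :
    exp (2 * r) ≤ (1 + r) / (1 - r) := by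
  -- `log ((1 + r) / (1 - r)) = 2 (r + r³/3 + r⁵/5 + ⋯)` has nonnegative terms.
  have hseries := hasSum_log_sub_log_of_abs_lt_one (abs_lt.2 ⟨by linarith, hr1⟩)
  rw [← log_div (by linarith) (by linarith)] at hseries
  rw [← le_log_iff_exp_le (by apply div_pos <;> linarith)]
  simpa using le_hasSum hseries 0 fun k _ => by positivity

theorem exp_two_mul_sqrt_le_two_mul_eval_T {η : ℝ} (hη0 : 0 ≤ η) (hη1 : η < 1) (n : ℕ) :
    exp (2 * n * √η) ≤ 2 * (T ℝ n).eval (2 / (1 - η) - 1) := by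
  obtain ⟨r, hr0, rfl⟩ : ∃ r, 0 ≤ r ∧ η = r ^ 2 := ⟨√η, sqrt_nonneg η, (sq_sqrt hη0).symm⟩
  rw [sqrt_sq hr0]
  have hr1 : r < 1 := by nlinarith
  have h1r : 0 < 1 - r ^ 2 := by linarith
  have hx : 1 ≤ 2 / (1 - r ^ 2) - 1 := by
    rw [le_sub_iff_add_le, le_div_iff₀ h1r]; linarith
  have hsqrt : √((2 / (1 - r ^ 2) - 1) ^ 2 - 1) = 2 * r / (1 - r ^ 2) := by
    rw [← sqrt_sq (by positivity : 0 ≤ 2 * r / (1 - r ^ 2))]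
    congr 1
    field_simp
    ring
  have hroot : 2 / (1 - r ^ 2) - 1 + 2 * r / (1 - r ^ 2) = (1 + r) / (1 - r) := by
    have : 1 - r ≠ 0 := by linarith
    field_simp
    ring
  calc exp (2 * n * r) = exp (2 * r) ^ n := by rw [← exp_nat_mul]; ring_nf
    _ ≤ ((1 + r) / (1 - r)) ^ n := by gcongr; exact exp_two_mul_le_one_add_div_one_sub hr0 hr1
    _ ≤ _ := by
        rw [← hroot, ← hsqrt]
        exact add_sqrt_sq_sub_one_pow_le_two_mul_eval_T_real_s10 n hx

theorem chebApprox_zero {η : ℝ} (hη0 : 0 ≤ η) (hη1 : η < 1) (s : ℝ) : chebApprox η s 0 = 1 := by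
  have hpos : 0 < (T ℝ ⌈s⌉₊).eval (2 / (1 - η) - 1) := by
    linarith [exp_pos (2 * ⌈s⌉₊ * √η), exp_two_mul_sqrt_le_two_mul_eval_T hη0 hη1 ⌈s⌉₊]
  rw [chebApprox, sub_zero, mul_one, div_self hpos.ne']

theorem abs_chebApprox_le {η s y : ℝ} (hη0 : 0 ≤ η) (hη1 : η < 1) (hηy : η ≤ y)
    (hy1 : y ≤ 1) : |chebApprox η s y| ≤ 2 * exp (-(2 * s * √η)) := by
  have hnum : |(T ℝ ⌈s⌉₊).eval (2 * (1 - y) / (1 - η) - 1)| ≤ 1 := by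
    refine abs_eval_T_real_le_one _ (abs_le.2 ⟨?_, ?_⟩)
    · have : 0 ≤ 2 * (1 - y) / (1 - η) := div_nonneg (by linarith) (by linarith)
      linarith
    · rw [sub_le_iff_le_add, div_le_iff₀ (by linarith)]; linarith
  have hden : exp (2 * s * √η) ≤ 2 * (T ℝ ⌈s⌉₊).eval (2 / (1 - η) - 1) :=
    (exp_le_exp.2 (by gcongr; exact Nat.le_ceil s)).trans
      (exp_two_mul_sqrt_le_two_mul_eval_T hη0 hη1 ⌈s⌉₊)
  have hD : 0 < (T ℝ ⌈s⌉₊).eval (2 / (1 - η) - 1) := by linarith [exp_pos (2 * s * √η)]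
  rw [chebApprox, abs_div, abs_of_pos hD, div_le_iff₀ hD, exp_neg]
  calc _ ≤ (1 : ℝ) := hnum
    _ = 2 * (exp (2 * s * √η))⁻¹ * (exp (2 * s * √η) / 2) := by field_simp
    _ ≤ _ := by gcongr; linarith

theorem cheb_base_case (t : ℕ) (ht : 2 ≤ t) :
    chebApprox (1 / t) (2 * Real.sqrt t) 0 = 1 ∧
      ∀ y : ℝ, 1 / (t : ℝ) ≤ y → y ≤ 1 →
        |chebApprox (1 / t) (2 * Real.sqrt t) y| ≤ 1 / 20 := by
  have htR : (2 : ℝ) ≤ t := by exact_mod_cast ht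
  have hη0 : (0 : ℝ) ≤ 1 / t := by positivity
  have hη1 : 1 / (t : ℝ) < 1 := by rw [div_lt_one (by linarith)]; linarith
  have hexponent : 2 * (2 * √t) * √(1 / t) = 4 := by
    rw [mul_assoc, mul_assoc, ← sqrt_mul (by positivity), mul_one_div_cancel (by positivity),
      sqrt_one]
    norm_num
  have hexp_four : 40 ≤ exp 4 := by
    have h := pow_le_pow_left₀ (by norm_num) (exp_one_gt_d9.le) 4
    rw [← exp_nat_mul] at h
    norm_num at h
    linarith
  refine ⟨chebApprox_zero hη0 hη1 _, fun y hy hy1 => ?_⟩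
  calc _ ≤ 2 * exp (-(2 * (2 * √t) * √(1 / t))) :=
        abs_chebApprox_le hη0 hη1 hy hy1
    _ ≤ 1 / 20 := by
        rw [hexponent, exp_neg, ← div_eq_mul_inv, div_le_div_iff₀ (exp_pos 4) (by norm_num)]
        linarith
end
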